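/- For fibrewise pointed maps f, g : X → Y over a normal base domain X, D_B(f, g) ≤ cat_B^*(f) + cat_B^*(g). -/

import Mathlib

open scoped unitInterval

variable {B X Y Z X' Y' : Type*} [TopologicalSpace B] [TopologicalSpace X]
  [TopologicalSpace Y] [TopologicalSpace Z] [TopologicalSpace X'] [TopologicalSpace Y']

/-- `f` and `g` are fibrewise homotopic over `B` on the subset `U ⊆ X`:
there is a homotopy `H` from `f|U` to `g|U` each of whose stages is fibrewise. -/
def FibHomotopicOn (pX : X → B) (pY : Y → B) (f g : X → Y) (U : Set X) : Prop :=
  ∃ H : C(U × unitInterval, Y),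
    (∀ u : U, H (u, 0) = f u) ∧ (∀ u : U, H (u, 1) = g u) ∧
    (∀ (u : U) (t : unitInterval), pY (H (u, t)) = pX u)

/-- The parametrized (fibrewise) homotopic distance `D_B(f,g)`: the least `n`
such that `X` has an open cover by `n+1` sets on each of which `f` and `g` are
fibrewise homotopic (`∞` if there is no such cover). -/
noncomputable def fibDist (pX : X → B) (pY : Y → B) (f g : X → Y) : ℕ∞ :=
  sInf ((fun n : ℕ => (n : ℕ∞)) ''
    {n : ℕ | ∃ U : Fin (n + 1) → Set X,
      (∀ i, IsOpen (U i)) ∧ (⋃ i, U i) = Set.univ ∧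
      ∀ i, FibHomotopicOn pX pY f g (U i)})

/-!
Proof idea: the triangle inequality `D_B(f, g) ≤ D_B(f, h) + D_B(g, h)` for `h = s_Y ∘ p_X`.
Take open covers `U₀, …, Uₙ` (with `f ≃ h` on each) and `V₀, …, Vₘ` (with `g ≃ h` on each),
and subordinate partitions of unity `ρ`, `η`. At a point `x`, the pairs `(i, j)` maximising
`ρᵢ(x) ηⱼ(x)` form a rectangle `P × Q`, and the open set of points where exactly the pairs of
`P × Q` beat all others lies in `Uᵢ ∩ Vⱼ` for every `(i, j) ∈ P × Q`, so `f ≃ g` there.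
Two such sets meet only if their rectangles are nested, so those with the same `|P| + |Q|` are
disjoint and can be glued; `|P| + |Q|` takes only `n + m + 1` values.
-/

open ContinuousMap Finset Function

set_option linter.unusedSectionVars false

section Homotopy

variable {pX : X → B} {pY : Y → B} {f g h : X → Y} {U : Set X}

theorem FibHomotopicOn.mono {V : Set X} (hfg : FibHomotopicOn pX pY f g U) (hVU : V ⊆ U) :
    FibHomotopicOn pX pY f g V := by
  obtain ⟨H, h0, h1, hp⟩ := hfg
  exact ⟨H.comp ⟨fun q => (Set.inclusion hVU q.1, q.2), by fun_prop⟩,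
    fun u => h0 _, fun u => h1 _, fun u t => hp _ t⟩

theorem FibHomotopicOn.symm (hfg : FibHomotopicOn pX pY f g U) : FibHomotopicOn pX pY g f U := by
  obtain ⟨H, h0, h1, hp⟩ := hfg
  exact ⟨H.comp ⟨fun q => (q.1, σ q.2), by fun_prop⟩,
    fun u => by simpa using h1 u, fun u => by simpa using h0 u, fun u t => hp u _⟩

/-- `H` as a homotopy between its restrictions to `U × {0}` and `U × {1}`. -/
def ContinuousMap.homotopyOfProd (H : C(U × I, Y)) :
    Homotopy ((H.comp prodSwap).curry 0) ((H.comp prodSwap).curry 1) where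
  toContinuousMap := H.comp prodSwap
  map_zero_left _ := rfl
  map_one_left _ := rfl

theorem FibHomotopicOn.trans (hfg : FibHomotopicOn pX pY f g U)
    (hgh : FibHomotopicOn pX pY g h U) : FibHomotopicOn pX pY f h U := by
  obtain ⟨H₁, h₁0, h₁1, h₁p⟩ := hfg
  obtain ⟨H₂, h₂0, h₂1, h₂p⟩ := hgh
  have hmid : (H₁.comp prodSwap).curry 1 = (H₂.comp prodSwap).curry 0 :=
    ext fun u => (h₁1 u).trans (h₂0 u).symm
  let G := H₁.homotopyOfProd.trans (H₂.homotopyOfProd.cast hmid.symm rfl)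
  refine ⟨G.toContinuousMap.comp prodSwap, fun u => (G.apply_zero u).trans (h₁0 u),
    fun u => (G.apply_one u).trans (h₂1 u), fun u t => ?_⟩
  change pY (G (t, u)) = pX u
  rw [Homotopy.trans_apply]
  split_ifs
  exacts [h₁p _ _, h₂p _ _]

theorem FibHomotopicOn.iUnion {ι : Type*} {A : ι → Set X} (hA : ∀ i, IsOpen (A i))
    (hdisj : Pairwise (Disjoint on A)) (hfg : ∀ i, FibHomotopicOn pX pY f g (A i)) :
    FibHomotopicOn pX pY f g (⋃ i, A i) := by
  choose H h0 h1 hp using hfg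
  let S : ι → Set ((⋃ i, A i) × I) := fun i => {q | q.1.1 ∈ A i}
  let F : ∀ i, C(S i, Y) := fun i =>
    (H i).comp ⟨fun q => (⟨q.1.1.1, q.2⟩, q.1.2), by fun_prop⟩
  have hF : ∀ i j q (hi : q ∈ S i) (hj : q ∈ S j), F i ⟨q, hi⟩ = F j ⟨q, hj⟩ := by
    intro i j q hi hj
    obtain rfl : i = j := hdisj.eq (Set.not_disjoint_iff.2 ⟨_, hi, hj⟩)
    rfl
  have hS : ∀ q, ∃ i, S i ∈ nhds q := fun q =>
    have ⟨i, hi⟩ := Set.mem_iUnion.1 q.1.2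
    ⟨i, ((hA i).preimage (by fun_prop)).mem_nhds hi⟩
  let G := liftCover S F hF hS
  have hG : ∀ (u : ⋃ i, A i) t i (hi : u.1 ∈ A i), G (u, t) = H i (⟨u, hi⟩, t) :=
    fun u t i hi => liftCover_coe (⟨(u, t), hi⟩ : S i)
  refine ⟨G, fun u => ?_, fun u => ?_, fun u t => ?_⟩ <;>
  · obtain ⟨i, hi⟩ := Set.mem_iUnion.1 u.2
    rw [hG u _ i hi]
    first | exact h0 i _ | exact h1 i _ | exact hp i _ _

end Homotopy

section DominantSet

variable {α κ : Type*}

def dominantSet (χ : κ → α → ℝ) (S : Finset κ) : Set α :=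
  {x | ∀ s ∈ S, 0 < χ s x ∧ ∀ t ∉ S, χ t x < χ s x}

theorem isOpen_dominantSet [TopologicalSpace α] [Finite κ] {χ : κ → α → ℝ}
    (hχ : ∀ s, Continuous (χ s)) (S : Finset κ) : IsOpen (dominantSet χ S) := by
  have : dominantSet χ S =
      ⋂ s ∈ S, ({x | 0 < χ s x} ∩ ⋂ t, {x | t ∉ S → χ t x < χ s x}) := by
    ext x; simp [dominantSet]
  rw [this]
  refine isOpen_biInter_finset fun s _ => (isOpen_lt continuous_const (hχ s)).inter <|
    isOpen_iInter_of_finite fun t => ?_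
  by_cases ht : t ∈ S
  · simp [ht]
  · simpa [ht] using isOpen_lt (hχ t) (hχ s)

theorem dominantSet_subset_support {χ : κ → α → ℝ} {S : Finset κ} {s : κ} (hs : s ∈ S) :
    dominantSet χ S ⊆ support (χ s) :=
  fun _ hx => (hx s hs).1.ne'

theorem subset_or_subset_of_mem_dominantSet {χ : κ → α → ℝ} {S S' : Finset κ} {x : α}
    (hx : x ∈ dominantSet χ S) (hx' : x ∈ dominantSet χ S') : S ⊆ S' ∨ S' ⊆ S := by
  by_contra! ⟨hSS', hS'S⟩
  obtain ⟨s, hs, hs'⟩ := not_subset.1 hSS'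
  obtain ⟨t, ht', ht⟩ := not_subset.1 hS'S
  exact lt_asymm ((hx s hs).2 t ht) ((hx' t ht').2 s hs')

end DominantSet

section Rectangles

variable {α ι κ : Type*}

theorem Finset.eq_and_eq_of_product_subset_of_card_add_card_eq {P P' : Finset ι}
    {Q Q' : Finset κ} (hP : P.Nonempty) (hQ : Q.Nonempty) (hsub : P ×ˢ Q ⊆ P' ×ˢ Q')
    (hcard : #P' + #Q' = #P + #Q) : P = P' ∧ Q = Q' := by
  have hsub' : (P : Set ι) ×ˢ (Q : Set κ) ⊆ P' ×ˢ Q' := by exact_mod_cast hsub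
  obtain ⟨hPP', hQQ'⟩ := (Set.prod_subset_prod_iff' (by simp [hP, hQ])).1 hsub'
  have hPP' : P ⊆ P' := by exact_mod_cast hPP'
  have hQQ' : Q ⊆ Q' := by exact_mod_cast hQQ'
  have := card_le_card hPP'
  have := card_le_card hQQ'
  exact ⟨eq_of_subset_of_card_le hPP' (by omega), eq_of_subset_of_card_le hQQ' (by omega)⟩

def nonemptyRectangles (ι κ : Type*) (k : ℕ) : Set (Finset ι × Finset κ) :=
  {R | R.1.Nonempty ∧ R.2.Nonempty ∧ #R.1 + #R.2 = k + 2}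

theorem pairwise_disjoint_dominantSet_nonemptyRectangles (χ : ι × κ → α → ℝ) (k : ℕ) :
    Pairwise (Disjoint on
      (fun R : nonemptyRectangles ι κ k => dominantSet χ (R.1.1 ×ˢ R.1.2))) := by
  rintro ⟨⟨P, Q⟩, hP, hQ, hk⟩ ⟨⟨P', Q'⟩, hP', hQ', hk'⟩ hne
  refine Set.disjoint_left.2 fun x hx hx' => hne ?_
  rcases subset_or_subset_of_mem_dominantSet hx hx' with hsub | hsub
  · obtain ⟨rfl, rfl⟩ := eq_and_eq_of_product_subset_of_card_add_card_eq hP hQ hsub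
      (hk'.trans hk.symm)
    rfl
  · obtain ⟨rfl, rfl⟩ := eq_and_eq_of_product_subset_of_card_add_card_eq hP' hQ' hsub
      (hk.trans hk'.symm)
    rfl

end Rectangles

section PartitionOfUnity

variable {ι κ : Type*} [Fintype ι] [Fintype κ]

theorem exists_finset_forall_eq_forall_lt_of_pos (v : ι → ℝ) {i₀ : ι} (hi₀ : 0 < v i₀) :
    ∃ P : Finset ι, P.Nonempty ∧ ∃ a > 0, (∀ i ∈ P, v i = a) ∧ ∀ i ∉ P, v i < a := by
  classical
  obtain ⟨i₁, -, hmax⟩ := exists_max_image univ v ⟨i₀, mem_univ i₀⟩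
  refine ⟨univ.filter (v · = v i₁), ⟨i₁, by simp⟩, v i₁, hi₀.trans_le (hmax i₀ (mem_univ _)),
    fun i hi => by simpa using hi, fun i hi => ?_⟩
  exact (hmax i (mem_univ i)).lt_of_ne (by simpa using hi)

theorem exists_mem_dominantSet_product (ρ : PartitionOfUnity ι X Set.univ)
    (η : PartitionOfUnity κ X Set.univ) (x : X) :
    ∃ P : Finset ι, ∃ Q : Finset κ, P.Nonempty ∧ Q.Nonempty ∧
      x ∈ dominantSet (fun p y => ρ p.1 y * η p.2 y) (P ×ˢ Q) := by
  obtain ⟨i₀, hi₀⟩ := ρ.exists_pos (Set.mem_univ x)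
  obtain ⟨j₀, hj₀⟩ := η.exists_pos (Set.mem_univ x)
  obtain ⟨P, hP, a, ha, hPa, hPlt⟩ := exists_finset_forall_eq_forall_lt_of_pos (ρ · x) hi₀
  obtain ⟨Q, hQ, b, hb, hQb, hQlt⟩ := exists_finset_forall_eq_forall_lt_of_pos (η · x) hj₀
  have hρle : ∀ i, ρ i x ≤ a := fun i => by
    by_cases hi : i ∈ P
    exacts [(hPa i hi).le, (hPlt i hi).le]
  have hηle : ∀ j, η j x ≤ b := fun j => by
    by_cases hj : j ∈ Q
    exacts [(hQb j hj).le, (hQlt j hj).le]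
  refine ⟨P, Q, hP, hQ, fun ⟨i, j⟩ hij => ?_⟩
  obtain ⟨hi, hj⟩ := mem_product.1 hij
  simp only [hPa i hi, hQb j hj]
  refine ⟨mul_pos ha hb, fun ⟨i', j'⟩ hij' => ?_⟩
  rcases not_and_or.1 (mt mem_product.2 hij') with hi' | hj'
  · exact mul_lt_mul_of_nonneg_of_pos (hPlt i' hi') (hηle j') (ρ.nonneg i' x) hb
  · exact mul_lt_mul' (hρle i') (hQlt j' hj') (η.nonneg j' x) ha

end PartitionOfUnity

section Cover

def IsFibHomotopicCover (pX : X → B) (pY : Y → B) (f g : X → Y) {ι : Type*} (U : ι → Set X) :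
    Prop :=
  (∀ i, IsOpen (U i)) ∧ (⋃ i, U i) = Set.univ ∧ ∀ i, FibHomotopicOn pX pY f g (U i)

variable {pX : X → B} {pY : Y → B} {f g h : X → Y}

theorem IsFibHomotopicCover.trans_symm [NormalSpace X] {n m : ℕ} {U : Fin (n + 1) → Set X}
    {V : Fin (m + 1) → Set X} (hU : IsFibHomotopicCover pX pY f h U)
    (hV : IsFibHomotopicCover pX pY g h V) :
    ∃ W : Fin (n + m + 1) → Set X, IsFibHomotopicCover pX pY f g W := by
  obtain ⟨hUo, hUc, hUf⟩ := hU
  obtain ⟨hVo, hVc, hVf⟩ := hV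
  obtain ⟨ρ, hρ⟩ := PartitionOfUnity.exists_isSubordinate_of_locallyFinite isClosed_univ U hUo
    (locallyFinite_of_finite U) hUc.ge
  obtain ⟨η, hη⟩ := PartitionOfUnity.exists_isSubordinate_of_locallyFinite isClosed_univ V hVo
    (locallyFinite_of_finite V) hVc.ge
  set χ : Fin (n + 1) × Fin (m + 1) → X → ℝ := fun p y => ρ p.1 y * η p.2 y
  have hχ : ∀ p, Continuous (χ p) := fun p => (ρ p.1).continuous.mul (η p.2).continuous
  let A : ∀ k : ℕ, nonemptyRectangles (Fin (n + 1)) (Fin (m + 1)) k → Set X :=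
    fun _ R => dominantSet χ (R.1.1 ×ˢ R.1.2)
  refine ⟨fun k => ⋃ R, A k R, fun k => isOpen_iUnion fun R => isOpen_dominantSet hχ _,
    Set.eq_univ_of_forall fun x => ?_, fun k => ?_⟩
  · obtain ⟨P, Q, hP, hQ, hx⟩ := exists_mem_dominantSet_product ρ η x
    have := hP.card_pos
    have := hQ.card_pos
    have := card_le_univ P
    have := card_le_univ Q
    simp only [Fintype.card_fin] at *
    exact Set.mem_iUnion.2 ⟨⟨#P + #Q - 2, by omega⟩,
      Set.mem_iUnion.2 ⟨⟨(P, Q), hP, hQ, by simp only; omega⟩, hx⟩⟩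
  · refine FibHomotopicOn.iUnion (fun R => isOpen_dominantSet hχ _)
      (pairwise_disjoint_dominantSet_nonemptyRectangles χ k) fun R => ?_
    obtain ⟨i, hi⟩ := R.2.1
    obtain ⟨j, hj⟩ := R.2.2.1
    have hsupp : A k R ⊆ support (ρ i) ∩ support (η j) :=
      (dominantSet_subset_support (s := (i, j)) (mem_product.2 ⟨hi, hj⟩)).trans
        (support_mul (ρ i) (η j)).le
    exact ((hUf i).mono ((hsupp.trans Set.inter_subset_left).trans
      (subset_tsupport _ |>.trans (hρ i)))).trans
      ((hVf j).mono ((hsupp.trans Set.inter_subset_right).trans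
      (subset_tsupport _ |>.trans (hη j)))).symm

theorem fibDist_le_of_isFibHomotopicCover {n : ℕ} {U : Fin (n + 1) → Set X}
    (hU : IsFibHomotopicCover pX pY f g U) : fibDist pX pY f g ≤ n :=
  sInf_le ⟨n, ⟨U, hU⟩, rfl⟩

theorem exists_isFibHomotopicCover_of_fibDist_ne_top (hfg : fibDist pX pY f g ≠ ⊤) :
    ∃ n : ℕ, fibDist pX pY f g = n ∧
      ∃ U : Fin (n + 1) → Set X, IsFibHomotopicCover pX pY f g U := by
  have hne : ((fun n : ℕ => (n : ℕ∞)) '' {n : ℕ | ∃ U : Fin (n + 1) → Set X,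
      IsFibHomotopicCover pX pY f g U}).Nonempty :=
    Set.nonempty_iff_ne_empty.2 fun h => hfg (by rw [fibDist]; exact h ▸ sInf_empty)
  obtain ⟨n, hU, hn⟩ := csInf_mem hne
  exact ⟨n, hn.symm, hU⟩

end Cover

theorem fibDist_le_add_cats_general [NormalSpace X] (pX : X → B) (pY : Y → B)
    (sY : B → Y) (f g : X → Y) :
    fibDist pX pY f g ≤
      fibDist pX pY f (fun x => sY (pX x)) + fibDist pX pY g (fun x => sY (pX x)) := by
  rcases eq_or_ne (fibDist pX pY f (fun x => sY (pX x))) ⊤ with hf | hf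
  · simp [hf]
  rcases eq_or_ne (fibDist pX pY g (fun x => sY (pX x))) ⊤ with hg | hg
  · simp [hg]
  obtain ⟨n, hn, U, hU⟩ := exists_isFibHomotopicCover_of_fibDist_ne_top hf
  obtain ⟨m, hm, V, hV⟩ := exists_isFibHomotopicCover_of_fibDist_ne_top hg
  obtain ⟨W, hW⟩ := hU.trans_symm hV
  rw [hn, hm]
  exact_mod_cast fibDist_le_of_isFibHomotopicCover hW

theorem fibDist_le_add_cats [NormalSpace X] (pX : X → B) (pY : Y → B)
    (sX : B → X) (sY : B → Y) (f g : X → Y)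
    (hpX : Continuous pX) (hpY : Continuous pY) (hsX : Continuous sX) (hsY : Continuous sY)
    (hsecX : ∀ b, pX (sX b) = b) (hsecY : ∀ b, pY (sY b) = b)
    (hf : Continuous f) (hg : Continuous g)
    (hfp : ∀ x, pY (f x) = pX x) (hgp : ∀ x, pY (g x) = pX x)
    (hfs : ∀ b, f (sX b) = sY b) (hgs : ∀ b, g (sX b) = sY b) :
    fibDist pX pY f g ≤
      fibDist pX pY f (fun x => sY (pX x)) + fibDist pX pY g (fun x => sY (pX x)) :=
  fibDist_le_add_cats_general pX pY sY f g
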